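/- Verification Theorem, part (iii), second case: If every switching cost g_ij is a constant (independent of (t,x)), then the optimal strategy is almost surely finite: P({ω : τ*_n(ω) < T for all n ≥ 1}) = 0. -/

import Mathlib

open MeasureTheory Set Filter
open scoped ENNReal

noncomputable section

namespace Switching

/-- Maximum of `f` over the indices `j ≠ i` (the inter-connected obstacle). -/
def maxNe {m : ℕ} (i : Fin m) (f : Fin m → ℝ) : ℝ :=
  ⨆ j : {j : Fin m // j ≠ i}, f (j : Fin m)

variable {Ω : Type*}

/-- The payoff functional `∫_t^τ ψ_i(s,X_s) ds + max_{j≠i}(-g_{ij}(τ,X_τ) + Y^j_τ) 1_{[τ<T]}`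
appearing in the Snell envelope characterization of the value processes. -/
def reward {k m : ℕ} (T : ℝ) (X : ℝ → Ω → EuclideanSpace ℝ (Fin k))
    (ψ : Fin m → ℝ → EuclideanSpace ℝ (Fin k) → ℝ)
    (g : Fin m → Fin m → ℝ → EuclideanSpace ℝ (Fin k) → ℝ)
    (Y : Fin m → ℝ → Ω → ℝ)
    (i : Fin m) (t : ℝ) (τ : Ω → ℝ) (ω : Ω) : ℝ :=
  (∫ s in Ioc t (τ ω), ψ i s (X s ω)) +
    indicator {ω' | τ ω' < T}
      (fun ω' => maxNe i fun j => -(g i j (τ ω') (X (τ ω') ω')) + Y j (τ ω') ω') ω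

/-- `Y` is the system of Snell-envelope value processes:  for every mode `i` and every
`t ∈ [0,T]`, `Y^i_t` is (a.s.) the least `F_t`-measurable random variable dominating
`E[∫_t^τ ψ_i(s,X_s) ds + max_{j≠i}(-g_{ij}(τ,X_τ)+Y^j_τ) 1_{[τ<T]} | F_t]` over all
stopping times `t ≤ τ ≤ T`. -/
def SnellSystem {m0 : MeasurableSpace Ω} {k m : ℕ} (T : ℝ) (μ : Measure Ω)
    (ℱ : Filtration ℝ m0) (X : ℝ → Ω → EuclideanSpace ℝ (Fin k))
    (ψ : Fin m → ℝ → EuclideanSpace ℝ (Fin k) → ℝ)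
    (g : Fin m → Fin m → ℝ → EuclideanSpace ℝ (Fin k) → ℝ)
    (Y : Fin m → ℝ → Ω → ℝ) : Prop :=
  ∀ i : Fin m, ∀ t ∈ Icc (0 : ℝ) T,
    (∀ τ : Ω → ℝ, IsStoppingTime ℱ (fun ω => ((τ ω : ℝ) : WithTop ℝ)) → (∀ ω, τ ω ∈ Icc t T) →
      ∀ᵐ ω ∂μ, (μ[reward T X ψ g Y i t τ | ℱ t]) ω ≤ Y i t ω) ∧
    (∀ Z : Ω → ℝ, Measurable[ℱ t] Z →
      (∀ τ : Ω → ℝ, IsStoppingTime ℱ (fun ω => ((τ ω : ℝ) : WithTop ℝ)) → (∀ ω, τ ω ∈ Icc t T) →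
        ∀ᵐ ω ∂μ, (μ[reward T X ψ g Y i t τ | ℱ t]) ω ≤ Z ω) →
      ∀ᵐ ω ∂μ, Y i t ω ≤ Z ω)

/-- An admissible switching strategy: a nondecreasing sequence of `[0,T]`-valued stopping
times `τ_n` (with the convention `τ_0 = 0`) together with `F_{τ_n}`-measurable mode choices
`ξ_n` (`ξ_0` being the initial mode). -/
structure Strategy {m0 : MeasurableSpace Ω} (T : ℝ) (ℱ : Filtration ℝ m0) (m : ℕ) where
  τ : ℕ → Ω → ℝ
  ξ : ℕ → Ω → Fin m
  τ_zero : ∀ ω, τ 0 ω = 0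
  τ_mono : ∀ ω, Monotone fun n => τ n ω
  τ_mem : ∀ n ω, τ n ω ∈ Icc (0 : ℝ) T
  τ_stop : ∀ n, IsStoppingTime ℱ (fun ω => ((τ n ω : ℝ) : WithTop ℝ))
  ξ_meas : ∀ n j, MeasurableSet[(τ_stop n).measurableSpace] {ω | ξ n ω = j}

variable {m0 : MeasurableSpace Ω} {T : ℝ} {ℱ : Filtration ℝ m0} {k m : ℕ}

/-- The mode indicator process `u_t` of a strategy: `u_t = ξ_n` on `(τ_n, τ_{n+1}]`
(and `u_t = ξ_0` on `[0, τ_1]`). -/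
def Strategy.mode (S : Strategy T ℱ m) (t : ℝ) (ω : Ω) : Fin m :=
  S.ξ (sSup {n | S.τ n ω < t}) ω

/-- The `n`-th switching cost `g_{ξ_{n-1} ξ_n}(τ_n, X_{τ_n}) 1_{[τ_n < T]}` (indexed so that
`cost g X n` is the cost of the `(n+1)`-st switch). -/
def Strategy.cost (S : Strategy T ℱ m)
    (g : Fin m → Fin m → ℝ → EuclideanSpace ℝ (Fin k) → ℝ)
    (X : ℝ → Ω → EuclideanSpace ℝ (Fin k)) (n : ℕ) (ω : Ω) : ℝ :=
  indicator {ω' | S.τ (n + 1) ω' < T}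
    (fun ω' => g (S.ξ n ω') (S.ξ (n + 1) ω') (S.τ (n + 1) ω') (X (S.τ (n + 1) ω') ω')) ω

/-- The reverse switching cost `g_{ξ_n ξ_{n-1}}(τ_n, X_{τ_n}) 1_{[τ_n < T]}`. -/
def Strategy.revCost (S : Strategy T ℱ m)
    (g : Fin m → Fin m → ℝ → EuclideanSpace ℝ (Fin k) → ℝ)
    (X : ℝ → Ω → EuclideanSpace ℝ (Fin k)) (n : ℕ) (ω : Ω) : ℝ :=
  indicator {ω' | S.τ (n + 1) ω' < T}
    (fun ω' => g (S.ξ (n + 1) ω') (S.ξ n ω') (S.τ (n + 1) ω') (X (S.τ (n + 1) ω') ω')) ω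

/-- Total switching cost, as an extended nonnegative real (so that infinite total cost is
represented faithfully). -/
def Strategy.costENN (S : Strategy T ℱ m)
    (g : Fin m → Fin m → ℝ → EuclideanSpace ℝ (Fin k) → ℝ)
    (X : ℝ → Ω → EuclideanSpace ℝ (Fin k)) (ω : Ω) : ℝ≥0∞ :=
  ∑' n : ℕ, ENNReal.ofReal (S.cost g X n ω)

/-- The expected total profit `J(δ,ξ)` of a strategy. -/
def profit (μ : Measure Ω) (X : ℝ → Ω → EuclideanSpace ℝ (Fin k))
    (ψ : Fin m → ℝ → EuclideanSpace ℝ (Fin k) → ℝ)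
    (g : Fin m → Fin m → ℝ → EuclideanSpace ℝ (Fin k) → ℝ)
    (S : Strategy T ℱ m) : ℝ :=
  ∫ ω, ((∫ s in Ioc (0 : ℝ) T, ψ (S.mode s ω) s (X s ω)) - ∑' n : ℕ, S.cost g X n ω) ∂μ

/-- The candidate optimal strategy `(δ*, u*)` built from the value processes `Y`:
`τ*_{n+1}` is the first time after `τ*_n` at which the current value process touches its
inter-connected obstacle (truncated at `T`), and the new mode attains the maximum there. -/
structure OptStrat (T : ℝ) (ℱ : Filtration ℝ m0)
    (X : ℝ → Ω → EuclideanSpace ℝ (Fin k))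
    (g : Fin m → Fin m → ℝ → EuclideanSpace ℝ (Fin k) → ℝ)
    (Y : Fin m → ℝ → Ω → ℝ) (i0 : Fin m) extends Strategy T ℱ m where
  start : ∀ ω, ξ 0 ω = i0
  hitting : ∀ n ω, τ (n + 1) ω =
    min (sInf {s : ℝ | τ n ω ≤ s ∧
      Y (ξ n ω) s ω = maxNe (ξ n ω) fun j => -(g (ξ n ω) j s (X s ω)) + Y j s ω}) T
  switch_ne : ∀ n ω, τ (n + 1) ω < T → ξ (n + 1) ω ≠ ξ n ω
  switch_attain : ∀ n ω, τ (n + 1) ω < T →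
    Y (ξ n ω) (τ (n + 1) ω) ω =
      -(g (ξ n ω) (ξ (n + 1) ω) (τ (n + 1) ω) (X (τ (n + 1) ω) ω)) +
        Y (ξ (n + 1) ω) (τ (n + 1) ω) ω

/-- The standing hypotheses of the optimal multi-modes switching problem. -/
structure Hyps {m0 : MeasurableSpace Ω} {k m : ℕ} (T α : ℝ) (μ : Measure Ω)
    (ℱ : Filtration ℝ m0) (X : ℝ → Ω → EuclideanSpace ℝ (Fin k))
    (ψ : Fin m → ℝ → EuclideanSpace ℝ (Fin k) → ℝ)
    (g : Fin m → Fin m → ℝ → EuclideanSpace ℝ (Fin k) → ℝ)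
    (Y : Fin m → ℝ → Ω → ℝ) : Prop where
  prob : IsProbabilityMeasure μ
  right_cont : ∀ t : ℝ, ℱ t = ⨅ s : {s : ℝ // t < s}, ℱ (s : ℝ)
  X_cont : ∀ ω, ContinuousOn (fun t => X t ω) (Icc 0 T)
  X_adapted : ∀ t : ℝ, Measurable[ℱ t] (X t)
  ψ_cont : ∀ i, ContinuousOn (fun p : ℝ × EuclideanSpace ℝ (Fin k) => ψ i p.1 p.2)
    (Icc 0 T ×ˢ univ)
  g_cont : ∀ i j, ContinuousOn (fun p : ℝ × EuclideanSpace ℝ (Fin k) => g i j p.1 p.2)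
    (Icc 0 T ×ˢ univ)
  ψ_int : ∀ i, Integrable (fun ω => ∫ s in Icc (0 : ℝ) T, (ψ i s (X s ω)) ^ 2) μ
  g_int : ∀ i j, Integrable (fun ω => ⨆ t : Icc (0 : ℝ) T, (g i j (t : ℝ) (X (t : ℝ) ω)) ^ 2) μ
  Y_int : ∀ i, Integrable (fun ω => ⨆ t : Icc (0 : ℝ) T, (Y i (t : ℝ) ω) ^ 2) μ
  g_diag : ∀ i, ∀ t ∈ Icc (0 : ℝ) T, ∀ x, g i i t x = 0
  g_nonneg : ∀ i j, ∀ t ∈ Icc (0 : ℝ) T, ∀ x, 0 ≤ g i j t x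
  g_triangle : ∀ i j l, j ≠ i → l ≠ i → l ≠ j → ∀ t ∈ Icc (0 : ℝ) T, ∀ x,
    g i l t x < g i j t x + g j l t x
  g_alpha : ∀ i j, i ≠ j → ∀ t ∈ Icc (0 : ℝ) T, ∀ x, α < g i j t x + g j i t x
  Y_cont : ∀ i ω, ContinuousOn (fun t => Y i t ω) (Icc 0 T)
  Y_adapted : ∀ i, ∀ t : ℝ, Measurable[ℱ t] (Y i t)
  Y_T : ∀ i ω, Y i T ω = 0
  snell : SnellSystem T μ ℱ X ψ g Y

end Switching

/-!
Fix `ω` at which the optimal strategy switches infinitely often before `T`. The switching times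
increase to some `τ∞ ≤ T`, and since the costs are constant, passing to the limit in
`Y^i_{τ_{n+1}} = -g_{ij} + Y^j_{τ_{n+1}}` along the switches that use a given transition `i → j`
infinitely often gives `Y^j_{τ∞} = Y^i_{τ∞} + g_{ij}`. Eventually every transition is of this
kind, so `n ↦ Y^{ξ_n}_{τ∞}` is eventually nondecreasing with the costs as increments. A mode
recurs, hence two consecutive switches are free, which contradicts the `α`-condition (back and
forth) or the strict triangle inequality (to a third mode). So the event is even empty.
-/

open scoped Topology

theorem Filter.eventually_frequently_eq_of_finite {β : Type*} [Finite β] (f : ℕ → β) :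
    ∀ᶠ n in atTop, ∃ᶠ n' in atTop, f n' = f n := by
  have hvalue : ∀ b, ∀ᶠ n in atTop, (∃ᶠ n' in atTop, f n' = b) ∨ f n ≠ b := by
    intro b
    by_cases hb : ∃ᶠ n' in atTop, f n' = b
    · exact Eventually.of_forall fun _ => Or.inl hb
    · exact (not_frequently.1 hb).mono fun _ => Or.inr
  filter_upwards [eventually_all.2 hvalue] with n hn
  exact (hn (f n)).resolve_right (not_not.2 rfl)

theorem exists_add_le_zero_of_eventually_eq_add {ι : Type*} [Finite ι] {ξ : ℕ → ι} {y : ι → ℝ}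
    {c : ι → ι → ℝ} (hc : ∀ i j, 0 ≤ c i j)
    (hstep : ∀ᶠ n in atTop, y (ξ (n + 1)) = y (ξ n) + c (ξ n) (ξ (n + 1))) :
    ∃ n, c (ξ n) (ξ (n + 1)) + c (ξ (n + 1)) (ξ (n + 2)) ≤ 0 := by
  obtain ⟨N, hN⟩ := eventually_atTop.1 hstep
  have hmono : ∀ p q, N ≤ p → p ≤ q → y (ξ p) ≤ y (ξ q) := by
    intro p q hp hpq
    induction q, hpq using Nat.le_induction with
    | base => exact le_rfl
    | succ q hpq ih => linarith [hN q (hp.trans hpq), hc (ξ q) (ξ (q + 1))]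
  obtain ⟨n, hnN, hrec⟩ :=
    ((eventually_ge_atTop N).and (eventually_frequently_eq_of_finite ξ)).exists
  obtain ⟨q, hq, hξq⟩ := frequently_atTop.1 hrec (n + 2)
  have hloop := hmono (n + 2) q (by omega) hq
  rw [hξq] at hloop
  exact ⟨n, by linarith [hN n hnN, hN (n + 1) (by omega)]⟩

namespace Switching

variable {Ω : Type*} {m0 : MeasurableSpace Ω} {T : ℝ} {ℱ : Filtration ℝ m0} {k m : ℕ}

theorem Strategy.bddAbove_τ (S : Strategy T ℱ m) (ω : Ω) : BddAbove (range fun n => S.τ n ω) :=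
  ⟨T, forall_mem_range.2 fun n => (S.τ_mem n ω).2⟩

theorem Strategy.ciSup_τ_mem (S : Strategy T ℱ m) (ω : Ω) : ⨆ n, S.τ n ω ∈ Icc 0 T :=
  ⟨S.τ_zero ω ▸ le_ciSup (S.bddAbove_τ ω) 0,
    ciSup_le fun n => (S.τ_mem n ω).2⟩

theorem Strategy.tendsto_comp_τ (S : Strategy T ℱ m) {f : ℝ → ℝ} (hf : ContinuousOn f (Icc 0 T))
    (ω : Ω) : Tendsto (fun n => f (S.τ n ω)) atTop (𝓝 (f (⨆ n, S.τ n ω))) := by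
  have hτ : Tendsto (fun n => S.τ n ω) atTop (𝓝 (⨆ n, S.τ n ω)) :=
    tendsto_atTop_ciSup (S.τ_mono ω) (S.bddAbove_τ ω)
  exact (hf _ (S.ciSup_τ_mem ω)).tendsto.comp
    (tendsto_nhdsWithin_iff.2 ⟨hτ, Eventually.of_forall fun n => S.τ_mem n ω⟩)

theorem OptStrat.limit_eq_add {X : ℝ → Ω → EuclideanSpace ℝ (Fin k)}
    {g : Fin m → Fin m → ℝ → EuclideanSpace ℝ (Fin k) → ℝ} {Y : Fin m → ℝ → Ω → ℝ} {i0 : Fin m}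
    (S : OptStrat T ℱ X g Y i0) (hconst : ∀ i j, ∀ t x t' x', g i j t x = g i j t' x') {ω : Ω}
    (hY : ∀ i, ContinuousOn (fun t => Y i t ω) (Icc 0 T)) (hω : ∀ n, S.τ (n + 1) ω < T) {n : ℕ}
    (hn : ∃ᶠ n' in atTop, (S.ξ n' ω, S.ξ (n' + 1) ω) = (S.ξ n ω, S.ξ (n + 1) ω)) :
    Y (S.ξ (n + 1) ω) (⨆ n, S.τ n ω) ω =
      Y (S.ξ n ω) (⨆ n, S.τ n ω) ω + g (S.ξ n ω) (S.ξ (n + 1) ω) 0 0 := by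
  have hlim : ∀ i, Tendsto (fun n' => Y i (S.τ (n' + 1) ω) ω) atTop
      (𝓝 (Y i (⨆ n, S.τ n ω) ω)) := fun i =>
    (S.tendsto_comp_τ (hY i) ω).comp (tendsto_add_atTop_nat 1)
  refine tendsto_nhds_unique_of_frequently_eq (hlim _) ((hlim _).add_const _) ?_
  refine hn.mono fun n' hn' => ?_
  obtain ⟨hi, hj⟩ := Prod.mk.inj hn'
  have hattain := S.switch_attain n' ω (hω n')
  rw [hi, hj, hconst _ _ _ _ 0 0] at hattain
  linarith

theorem Hyps.cost_add_pos {α : ℝ} {μ : Measure Ω} {X : ℝ → Ω → EuclideanSpace ℝ (Fin k)}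
    {ψ : Fin m → ℝ → EuclideanSpace ℝ (Fin k) → ℝ}
    {g : Fin m → Fin m → ℝ → EuclideanSpace ℝ (Fin k) → ℝ} {Y : Fin m → ℝ → Ω → ℝ}
    (H : Hyps T α μ ℱ X ψ g Y) (hα : 0 ≤ α) {t : ℝ} (ht : t ∈ Icc 0 T)
    (x : EuclideanSpace ℝ (Fin k)) {i j l : Fin m} (hij : j ≠ i) (hjl : l ≠ j) :
    0 < g i j t x + g j l t x := by
  by_cases hli : l = i
  · subst hli
    exact hα.trans_lt (H.g_alpha l j hij.symm t ht x)
  · exact (H.g_nonneg i l t ht x).trans_lt (H.g_triangle i j l hij hli hjl t ht x)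

/-- **Verification Theorem, part (iii), second case.**  If every switching cost `g_{ij}` is a
constant (independent of `(t,x)`), then the optimal strategy is almost surely finite:
`P({ω : τ*_n(ω) < T for all n ≥ 1}) = 0`. -/
theorem verification_theorem_part_iii_constant_costs
    {Ω : Type*} {m0 : MeasurableSpace Ω} {k m : ℕ} {T α : ℝ}
    {μ : Measure Ω} {ℱ : Filtration ℝ m0}
    {X : ℝ → Ω → EuclideanSpace ℝ (Fin k)}
    {ψ : Fin m → ℝ → EuclideanSpace ℝ (Fin k) → ℝ}
    {g : Fin m → Fin m → ℝ → EuclideanSpace ℝ (Fin k) → ℝ}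
    {Y : Fin m → ℝ → Ω → ℝ}
    (hα : 0 < α)
    (H : Hyps T α μ ℱ X ψ g Y)
    (hconst : ∀ i j, ∀ t x t' x', g i j t x = g i j t' x')
    (i0 : Fin m)
    (S : OptStrat T ℱ X g Y i0) :
    μ {ω | ∀ n : ℕ, S.τ (n + 1) ω < T} = 0 := by
  suffices hempty : {ω | ∀ n : ℕ, S.τ (n + 1) ω < T} = ∅ by rw [hempty, measure_empty]
  refine eq_empty_of_forall_notMem fun ω hω => ?_
  have h0 : (0 : ℝ) ∈ Icc 0 T := S.τ_zero ω ▸ S.τ_mem 0 ω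
  have hstep := (eventually_frequently_eq_of_finite fun n => (S.ξ n ω, S.ξ (n + 1) ω)).mono
    fun n hn => S.limit_eq_add hconst (fun i => H.Y_cont i ω) hω hn
  obtain ⟨n, hn⟩ := exists_add_le_zero_of_eventually_eq_add (ξ := fun n => S.ξ n ω)
    (y := fun i => Y i (⨆ n, S.τ n ω) ω) (fun i j => H.g_nonneg i j 0 h0 0) hstep
  exact (H.cost_add_pos hα.le h0 0 (S.switch_ne n ω (hω n))
    (S.switch_ne (n + 1) ω (hω (n + 1)))).not_ge hn

end Switching

end
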